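/- Let λ₀ = 1/2 − ∫_0^{2π} [ e^{−r²(1−cos s)/(2Δt)}/(4π) − (1−cos s) r² E₁(r²(1−cos s)/(2Δt))/(8πΔt) ] ds, where E₁(x) = ∫_x^∞ e^{−t}/t dt. Then λ₀ > 0 for all r > 0 and Δt > 0. -/
import Mathlib


open Real MeasureTheory

/-- The exponential integral `E₁(x) = ∫_x^∞ e^{-t}/t dt`. -/
noncomputable def E1 (x : ℝ) : ℝ := ∫ t in Set.Ioi x, Real.exp (-t) / t

lemma E1_nonneg {x : ℝ} (hx : 0 ≤ x) : 0 ≤ E1 x := by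
  refine MeasureTheory.setIntegral_nonneg measurableSet_Ioi fun t ht => ?_
  exact div_nonneg (Real.exp_pos _).le (le_of_lt (lt_of_le_of_lt hx ht))

/-- the eigenvalue `λ₀` of the zeroth Fourier mode is positive
for all `r > 0` and `Δt > 0`. -/
theorem lambda_zero_pos (r Δt : ℝ) (hr : 0 < r) (hΔt : 0 < Δt) :
    0 < 1 / 2 - ∫ s in (0:ℝ)..(2 * π),
        (Real.exp (-(r ^ 2 * (1 - Real.cos s)) / (2 * Δt)) / (4 * π) -
          (1 - Real.cos s) * r ^ 2 * E1 (r ^ 2 * (1 - Real.cos s) / (2 * Δt)) /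
            (8 * π * Δt)) := by
  have hπ : (0:ℝ) < π := Real.pi_pos
  set f : ℝ → ℝ := fun s =>
    Real.exp (-(r ^ 2 * (1 - Real.cos s)) / (2 * Δt)) / (4 * π) -
      (1 - Real.cos s) * r ^ 2 * E1 (r ^ 2 * (1 - Real.cos s) / (2 * Δt)) /
        (8 * π * Δt) with hf
  set g : ℝ → ℝ := fun s =>
    Real.exp (-(r ^ 2 * (1 - Real.cos s)) / (2 * Δt)) / (4 * π) with hg
  have hgc : Continuous g := by
    apply Continuous.div_const
    exact Real.continuous_exp.comp ((continuous_const.mul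
      (continuous_const.sub Real.continuous_cos)).neg.div_const _)
  -- g < const integral
  have hglt : (∫ s in (0:ℝ)..(2 * π), g s) < 1 / 2 := by
    have hconst : (∫ s in (0:ℝ)..(2 * π), (fun _ : ℝ => 1 / (4 * π)) s) = 1 / 2 := by
      rw [intervalIntegral.integral_const]
      rw [smul_eq_mul]
      field_simp
      ring
    rw [← hconst]
    refine intervalIntegral.integral_lt_integral_of_continuousOn_of_le_of_exists_lt
      (by positivity) hgc.continuousOn continuousOn_const ?_ ?_
    · intro s _
      have h1 : (0:ℝ) ≤ 1 - Real.cos s := by nlinarith [Real.cos_le_one s]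
      have hexp : Real.exp (-(r ^ 2 * (1 - Real.cos s)) / (2 * Δt)) ≤ 1 :=
        Real.exp_le_one_iff.2 (div_nonpos_of_nonpos_of_nonneg (by nlinarith) (by linarith))
      simp only [hg]
      gcongr
    · refine ⟨π, ⟨hπ.le, by linarith⟩, ?_⟩
      simp only [hg, Real.cos_pi]
      have hexp : Real.exp (-(r ^ 2 * (1 - (-1:ℝ))) / (2 * Δt)) < 1 := by
        apply Real.exp_lt_one_iff.2
        rw [neg_div]
        have : 0 < r ^ 2 * (1 - (-1:ℝ)) / (2 * Δt) := by positivity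
        linarith
      gcongr
  -- pointwise f ≤ g
  have hfg : ∀ s ∈ Set.Icc (0:ℝ) (2 * π), f s ≤ g s := by
    intro s _
    have h1 : (0:ℝ) ≤ 1 - Real.cos s := by nlinarith [Real.cos_le_one s]
    have hE : 0 ≤ E1 (r ^ 2 * (1 - Real.cos s) / (2 * Δt)) :=
      E1_nonneg (by positivity)
    simp only [hf, hg]
    have : 0 ≤ (1 - Real.cos s) * r ^ 2 * E1 (r ^ 2 * (1 - Real.cos s) / (2 * Δt)) /
        (8 * π * Δt) := by positivity
    linarith
  by_cases hint : IntervalIntegrable f volume 0 (2 * π)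
  · have hle : (∫ s in (0:ℝ)..(2 * π), f s) ≤ ∫ s in (0:ℝ)..(2 * π), g s :=
      intervalIntegral.integral_mono_on (by positivity) hint
        (hgc.intervalIntegrable _ _) hfg
    have := hle.trans_lt hglt
    simp only [hf] at this
    linarith
  · rw [hf] at hint
    rw [intervalIntegral.integral_undef hint]
    norm_num
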